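/- Let ψ : [1,∞) → ℝ be positive, convex, differentiable with ψ'(t) < 0 for all t ≥ 1, and ψ(t) → 0 as t → ∞; set λ(t) = ψ(t)/|ψ'(t)| and α(t) = ψ(t)/(t·|ψ'(t)|). Assume λ is nondecreasing and α is nonincreasing on [1,∞). Then for every n ∈ ℕ (n ≥ 1) with α(n) ≤ 1/4, the integral ∫_n^∞ t·ψ(t) dt is finite and n·ψ(n)·λ(n) ≤ ∫_n^∞ t·ψ(t) dt ≤ n·ψ(n)·λ(n)·(1 + 4·α(n)). -/

import Mathlib

open MeasureTheory Real Set

/-! With `L = λ(n)` and `a = α(n)`, the monotonicity of `λ` and `α` on `[n, ∞)` amounts to the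
differential inequalities `ψ' + ψ / L ≥ 0` and `ψ / a + t ψ' ≤ 0`, so `ψ(t) e^{t/L}` increases and
`t^{1/a} ψ(t)` decreases. Hence `ψ(n) e^{-(t-n)/L} ≤ ψ(t) ≤ ψ(n) (n/t)^{1/a}` for `t ≥ n`.
Integrating `t ψ(t)` against these bounds gives `n ψ(n) L` from below and `n² ψ(n) a / (1 - 2a)`
from above, and `a / (1 - 2a) ≤ a (1 + 4a)` exactly when `a ≤ 1/4`. -/

section Comparison

variable {f f' : ℝ → ℝ} {a : ℝ}

theorem antitoneOn_rpow_mul_of_mul_add_mul_deriv_nonpos {β : ℝ} (ha : 0 < a)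
    (hf : ∀ t ∈ Ici a, HasDerivAt f (f' t) t) (h : ∀ t ∈ Ici a, β * f t + t * f' t ≤ 0) :
    AntitoneOn (fun t => t ^ β * f t) (Ici a) := by
  have hder : ∀ t ∈ Ici a,
      HasDerivAt (fun t => t ^ β * f t) (β * t ^ (β - 1) * f t + t ^ β * f' t) t := fun t ht =>
    (hasDerivAt_rpow_const (Or.inl (ha.trans_le ht).ne')).mul (hf t ht)
  refine antitoneOn_of_hasDerivWithinAt_nonpos (convex_Ici a)
    (fun t ht => (hder t ht).continuousAt.continuousWithinAt)
    (fun t ht => (hder t (interior_subset ht)).hasDerivWithinAt) fun t ht => ?_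
  have ht : a < t := by rwa [interior_Ici] at ht
  have ht0 : 0 < t := ha.trans ht
  calc β * t ^ (β - 1) * f t + t ^ β * f' t = t ^ (β - 1) * (β * f t + t * f' t) := by
        rw [rpow_sub_one ht0.ne']
        field_simp
    _ ≤ 0 := mul_nonpos_of_nonneg_of_nonpos (by positivity) (h t ht.le)

theorem monotoneOn_mul_exp_of_deriv_add_mul_nonneg {c : ℝ}
    (hf : ∀ t ∈ Ici a, HasDerivAt f (f' t) t) (h : ∀ t ∈ Ici a, 0 ≤ f' t + c * f t) :
    MonotoneOn (fun t => f t * exp (c * t)) (Ici a) := by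
  have hder : ∀ t ∈ Ici a,
      HasDerivAt (fun t => f t * exp (c * t))
        (f' t * exp (c * t) + f t * (exp (c * t) * (c * 1))) t :=
    fun t ht => (hf t ht).mul ((hasDerivAt_id' t).const_mul c).exp
  refine monotoneOn_of_hasDerivWithinAt_nonneg (convex_Ici a)
    (fun t ht => (hder t ht).continuousAt.continuousWithinAt)
    (fun t ht => (hder t (interior_subset ht)).hasDerivWithinAt) fun t ht => ?_
  calc 0 ≤ exp (c * t) * (f' t + c * f t) := by positivity [h t (interior_subset ht)]
    _ = _ := by ring

end Comparison

section ImproperIntegrals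

variable {f : ℝ → ℝ} {x : ℝ}

theorem integrableOn_Ioi_of_le_mul_rpow {C p : ℝ} (hx : 0 < x) (hp : p < -1)
    (hf : ContinuousOn f (Ioi x)) (hf0 : ∀ t ∈ Ioi x, 0 ≤ f t) (h : ∀ t ∈ Ioi x, f t ≤ C * t ^ p) :
    IntegrableOn f (Ioi x) := by
  refine ((integrableOn_Ioi_rpow_of_lt hp hx).const_mul C).mono'
    (hf.aestronglyMeasurable measurableSet_Ioi) ?_
  filter_upwards [ae_restrict_mem measurableSet_Ioi] with t ht
  rw [norm_of_nonneg (hf0 t ht)]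
  exact h t ht

theorem setIntegral_Ioi_le_of_le_mul_rpow {C p : ℝ} (hx : 0 < x) (hp : p < -1)
    (hf : IntegrableOn f (Ioi x)) (h : ∀ t ∈ Ioi x, f t ≤ C * t ^ p) :
    ∫ t in Ioi x, f t ≤ C * (-x ^ (p + 1) / (p + 1)) := by
  rw [← integral_Ioi_rpow_of_lt hp hx, ← integral_const_mul]
  exact setIntegral_mono_on hf ((integrableOn_Ioi_rpow_of_lt hp hx).const_mul C)
    measurableSet_Ioi h

theorem le_setIntegral_Ioi_of_mul_exp_le {K c : ℝ} (hc : c < 0)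
    (hf : IntegrableOn f (Ioi x)) (h : ∀ t ∈ Ioi x, K * exp (c * (t - x)) ≤ f t) :
    -K / c ≤ ∫ t in Ioi x, f t := by
  have hexp : ∀ t, K * exp (c * (t - x)) = K * exp (-(c * x)) * exp (c * t) := fun t => by
    rw [mul_assoc, ← exp_add]; ring_nf
  simp_rw [hexp] at h
  have hint := (integrableOn_exp_mul_Ioi hc x).const_mul (K * exp (-(c * x)))
  calc -K / c = ∫ t in Ioi x, K * exp (-(c * x)) * exp (c * t) := by
        rw [integral_const_mul, integral_exp_mul_Ioi hc, mul_div_assoc', mul_neg, mul_assoc,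
          ← exp_add, neg_add_cancel, exp_zero, mul_one]
    _ ≤ ∫ t in Ioi x, f t := setIntegral_mono_on hint hf measurableSet_Ioi h

end ImproperIntegrals

theorem inv_mul_add_mul_nonpos_of_div_le {p d t a : ℝ} (ht : 0 < t) (hd : d < 0) (ha : 0 < a)
    (h : p / (t * |d|) ≤ a) : a⁻¹ * p + t * d ≤ 0 := by
  rw [abs_of_neg hd, div_le_iff₀ (by nlinarith)] at h
  have := mul_le_mul_of_nonneg_left h (inv_nonneg.2 ha.le)
  rw [inv_mul_cancel_left₀ ha.ne'] at this
  linarith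

theorem add_inv_mul_nonneg_of_le_div {p d L : ℝ} (hd : d < 0) (hL : 0 < L)
    (h : L ≤ p / |d|) : 0 ≤ d + L⁻¹ * p := by
  rw [abs_of_neg hd, le_div_iff₀ (by linarith)] at h
  have := mul_le_mul_of_nonneg_left h (inv_nonneg.2 hL.le)
  rw [inv_mul_cancel_left₀ hL.ne'] at this
  linarith

theorem one_sub_inv_lt_neg_one {a : ℝ} (ha : 0 < a) (ha2 : a < 1 / 2) : 1 - a⁻¹ < -1 := by
  have : 2 < a⁻¹ := by rw [lt_inv_comm₀ two_pos ha]; linarith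
  linarith

theorem div_one_sub_two_mul_le {a : ℝ} (ha : 0 ≤ a) (ha4 : a ≤ 1 / 4) :
    a / (1 - 2 * a) ≤ a * (1 + 4 * a) := by
  rw [div_le_iff₀ (by linarith)]
  nlinarith [mul_nonneg ha (by linarith : 0 ≤ 1 / 4 - a)]

section DecreasingProfile

variable {ψ ψ' : ℝ → ℝ} {x : ℝ}

theorem mul_le_mul_rpow_of_div_mul_abs_deriv_le {a t : ℝ} (hx : 0 < x)
    (hderiv : ∀ t ∈ Ici x, HasDerivAt ψ (ψ' t) t) (hneg : ∀ t ∈ Ici x, ψ' t < 0) (ha : 0 < a)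
    (hα : ∀ t ∈ Ici x, ψ t / (t * |ψ' t|) ≤ a) (ht : t ∈ Ici x) :
    t * ψ t ≤ x ^ a⁻¹ * ψ x * t ^ (1 - a⁻¹) := by
  have ht0 : 0 < t := hx.trans_le ht
  have hanti := antitoneOn_rpow_mul_of_mul_add_mul_deriv_nonpos hx hderiv fun s hs =>
    inv_mul_add_mul_nonpos_of_div_le (hx.trans_le hs) (hneg s hs) ha (hα s hs)
  calc t * ψ t = t ^ (1 - a⁻¹) * (t ^ a⁻¹ * ψ t) := by
        rw [← mul_assoc, ← rpow_add ht0, sub_add_cancel, rpow_one]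
    _ ≤ t ^ (1 - a⁻¹) * (x ^ a⁻¹ * ψ x) :=
        mul_le_mul_of_nonneg_left (hanti self_mem_Ici ht ht) (by positivity)
    _ = x ^ a⁻¹ * ψ x * t ^ (1 - a⁻¹) := mul_comm _ _

theorem mul_exp_le_of_le_div_abs_deriv {L t : ℝ}
    (hderiv : ∀ t ∈ Ici x, HasDerivAt ψ (ψ' t) t) (hneg : ∀ t ∈ Ici x, ψ' t < 0) (hL : 0 < L)
    (hlam : ∀ t ∈ Ici x, L ≤ ψ t / |ψ' t|) (ht : t ∈ Ici x) :
    ψ x * exp (-L⁻¹ * (t - x)) ≤ ψ t := by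
  have hmono := monotoneOn_mul_exp_of_deriv_add_mul_nonneg hderiv fun s hs =>
    add_inv_mul_nonneg_of_le_div (hneg s hs) hL (hlam s hs)
  calc ψ x * exp (-L⁻¹ * (t - x)) = ψ x * exp (L⁻¹ * x) * exp (-(L⁻¹ * t)) := by
        rw [mul_assoc, ← exp_add]; ring_nf
    _ ≤ ψ t * exp (L⁻¹ * t) * exp (-(L⁻¹ * t)) :=
        mul_le_mul_of_nonneg_right (hmono self_mem_Ici ht ht) (exp_pos _).le
    _ = ψ t := by rw [mul_assoc, ← exp_add, add_neg_cancel, exp_zero, mul_one]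

theorem integrableOn_Ioi_id_mul_of_div_mul_abs_deriv_le {a : ℝ} (hx : 0 < x)
    (hpos : ∀ t ∈ Ici x, 0 < ψ t) (hderiv : ∀ t ∈ Ici x, HasDerivAt ψ (ψ' t) t)
    (hneg : ∀ t ∈ Ici x, ψ' t < 0) (ha : 0 < a) (ha2 : a < 1 / 2)
    (hα : ∀ t ∈ Ici x, ψ t / (t * |ψ' t|) ≤ a) :
    IntegrableOn (fun t => t * ψ t) (Ioi x) := by
  refine integrableOn_Ioi_of_le_mul_rpow hx (one_sub_inv_lt_neg_one ha ha2)
    (fun t ht => (continuousAt_id.mul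
      (hderiv t (Ioi_subset_Ici_self ht)).continuousAt).continuousWithinAt)
    (fun t ht => (mul_pos (hx.trans ht) (hpos t (Ioi_subset_Ici_self ht))).le)
    fun t ht =>
      mul_le_mul_rpow_of_div_mul_abs_deriv_le hx hderiv hneg ha hα (Ioi_subset_Ici_self ht)

theorem setIntegral_Ioi_id_mul_le {a : ℝ} (hx : 0 < x) (hψx : 0 ≤ ψ x)
    (hderiv : ∀ t ∈ Ici x, HasDerivAt ψ (ψ' t) t) (hneg : ∀ t ∈ Ici x, ψ' t < 0) (ha : 0 < a)
    (ha4 : a ≤ 1 / 4) (hα : ∀ t ∈ Ici x, ψ t / (t * |ψ' t|) ≤ a)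
    (hint : IntegrableOn (fun t => t * ψ t) (Ioi x)) :
    ∫ t in Ioi x, t * ψ t ≤ x * ψ x * (x * a) * (1 + 4 * a) := by
  have hp := one_sub_inv_lt_neg_one ha (by linarith)
  calc ∫ t in Ioi x, t * ψ t ≤ x ^ a⁻¹ * ψ x * (-x ^ (1 - a⁻¹ + 1) / (1 - a⁻¹ + 1)) :=
        setIntegral_Ioi_le_of_le_mul_rpow hx hp hint fun t ht =>
          mul_le_mul_rpow_of_div_mul_abs_deriv_le hx hderiv hneg ha hα (Ioi_subset_Ici_self ht)
    _ = x ^ 2 * ψ x * (a / (1 - 2 * a)) := by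
        have hpow : x ^ a⁻¹ * x ^ (1 - a⁻¹ + 1) = x ^ 2 := by
          rw [← rpow_add hx, show a⁻¹ + (1 - a⁻¹ + 1) = (2 : ℕ) by push_cast; ring, rpow_natCast]
        have hexp : 1 - a⁻¹ + 1 = -((1 - 2 * a) / a) := by field_simp; ring
        rw [mul_div_assoc', mul_neg, mul_right_comm, hpow, hexp, neg_div_neg_eq,
          div_div_eq_mul_div, mul_div_assoc]
    _ ≤ x ^ 2 * ψ x * (a * (1 + 4 * a)) := by
        gcongr
        exact div_one_sub_two_mul_le ha.le ha4
    _ = x * ψ x * (x * a) * (1 + 4 * a) := by ring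

theorem mul_mul_le_setIntegral_Ioi_id_mul {L : ℝ} (hx : 0 < x) (hψx : 0 ≤ ψ x)
    (hderiv : ∀ t ∈ Ici x, HasDerivAt ψ (ψ' t) t) (hneg : ∀ t ∈ Ici x, ψ' t < 0) (hL : 0 < L) (hlam : ∀ t ∈ Ici x, L ≤ ψ t / |ψ' t|)
    (hint : IntegrableOn (fun t => t * ψ t) (Ioi x)) :
    x * ψ x * L ≤ ∫ t in Ioi x, t * ψ t := by
  have hc : -L⁻¹ < 0 := neg_neg_of_pos (inv_pos.2 hL)
  calc x * ψ x * L = -(x * ψ x) / -L⁻¹ := by field_simp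
    _ ≤ ∫ t in Ioi x, t * ψ t := le_setIntegral_Ioi_of_mul_exp_le hc hint fun t ht => by
        calc x * ψ x * exp (-L⁻¹ * (t - x)) = x * (ψ x * exp (-L⁻¹ * (t - x))) :=
              mul_assoc _ _ _
          _ ≤ t * ψ t := mul_le_mul ht.le
              (mul_exp_le_of_le_div_abs_deriv hderiv hneg hL hlam (Ioi_subset_Ici_self ht))
              (mul_nonneg hψx (exp_pos _).le)
              (hx.trans ht).le

end DecreasingProfile

theorem integral_t_psi_two_sided_general (ψ ψ' : ℝ → ℝ)
    (hpos : ∀ t, 1 ≤ t → 0 < ψ t)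
    (hderiv : ∀ t, 1 ≤ t → HasDerivAt ψ (ψ' t) t)
    (hneg : ∀ t, 1 ≤ t → ψ' t < 0)
    (hlam_mono : ∀ s t, 1 ≤ s → s ≤ t → ψ s / |ψ' s| ≤ ψ t / |ψ' t|)
    (halp_anti : ∀ s t, 1 ≤ s → s ≤ t → ψ t / (t * |ψ' t|) ≤ ψ s / (s * |ψ' s|))
    (n : ℕ) (hn : 1 ≤ n) (hα : ψ (n : ℝ) / ((n : ℝ) * |ψ' (n : ℝ)|) ≤ 1 / 4) :
    MeasureTheory.IntegrableOn (fun t => t * ψ t) (Set.Ici (n : ℝ)) ∧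
      (n : ℝ) * ψ (n : ℝ) * (ψ (n : ℝ) / |ψ' (n : ℝ)|) ≤
        (∫ t in Set.Ici (n : ℝ), t * ψ t) ∧
      (∫ t in Set.Ici (n : ℝ), t * ψ t) ≤
        (n : ℝ) * ψ (n : ℝ) * (ψ (n : ℝ) / |ψ' (n : ℝ)|) *
          (1 + 4 * (ψ (n : ℝ) / ((n : ℝ) * |ψ' (n : ℝ)|))) := by
  have hx : (1 : ℝ) ≤ n := by exact_mod_cast hn
  have hx0 : (0 : ℝ) < n := zero_lt_one.trans_le hx
  have hIci {P : ℝ → Prop} (h : ∀ t, 1 ≤ t → P t) : ∀ t ∈ Ici (n : ℝ), P t :=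
    fun t ht => h t (hx.trans ht)
  have hd : 0 < |ψ' n| := abs_pos.2 (hneg n hx).ne
  have hL : 0 < ψ n / |ψ' n| := div_pos (hpos n hx) hd
  have ha : 0 < ψ n / (n * |ψ' n|) := div_pos (hpos n hx) (mul_pos hx0 hd)
  have hLa : (n : ℝ) * (ψ n / (n * |ψ' n|)) = ψ n / |ψ' n| := by field_simp
  have hint := integrableOn_Ioi_id_mul_of_div_mul_abs_deriv_le hx0 (hIci hpos) (hIci hderiv)
    (hIci hneg) ha (by linarith) fun t ht => halp_anti n t hx ht
  rw [integrableOn_Ici_iff_integrableOn_Ioi, integral_Ici_eq_integral_Ioi]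
  refine ⟨hint, ?_, ?_⟩
  · exact mul_mul_le_setIntegral_Ioi_id_mul hx0 (hpos n hx).le (hIci hderiv) (hIci hneg) hL
      (fun t ht => hlam_mono n t hx ht) hint
  · rw [← hLa]
    exact setIntegral_Ioi_id_mul_le hx0 (hpos n hx).le (hIci hderiv) (hIci hneg) ha hα
      (fun t ht => halp_anti n t hx ht) hint

/-- Under the `𝔐`-type conditions on `ψ`, with `λ(t) = ψ(t)/|ψ'(t)|`
nondecreasing and `α(t) = ψ(t)/(t|ψ'(t)|)` nonincreasing, if `n ≥ 1` and `α(n) ≤ 1/4` then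
`∫_n^∞ tψ(t) dt` is finite and `nψ(n)λ(n) ≤ ∫_n^∞ tψ(t) dt ≤ nψ(n)λ(n)(1 + 4α(n))`. -/
theorem integral_t_psi_two_sided (ψ ψ' : ℝ → ℝ)
    (hpos : ∀ t, 1 ≤ t → 0 < ψ t)
    (hconv : ConvexOn ℝ (Set.Ici (1 : ℝ)) ψ)
    (hderiv : ∀ t, 1 ≤ t → HasDerivAt ψ (ψ' t) t)
    (hneg : ∀ t, 1 ≤ t → ψ' t < 0)
    (hlim : Filter.Tendsto ψ Filter.atTop (nhds 0))
    (hlam_mono : ∀ s t, 1 ≤ s → s ≤ t → ψ s / |ψ' s| ≤ ψ t / |ψ' t|)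
    (halp_anti : ∀ s t, 1 ≤ s → s ≤ t → ψ t / (t * |ψ' t|) ≤ ψ s / (s * |ψ' s|))
    (n : ℕ) (hn : 1 ≤ n) (hα : ψ (n : ℝ) / ((n : ℝ) * |ψ' (n : ℝ)|) ≤ 1 / 4) :
    MeasureTheory.IntegrableOn (fun t => t * ψ t) (Set.Ici (n : ℝ)) ∧
      (n : ℝ) * ψ (n : ℝ) * (ψ (n : ℝ) / |ψ' (n : ℝ)|) ≤
        (∫ t in Set.Ici (n : ℝ), t * ψ t) ∧
      (∫ t in Set.Ici (n : ℝ), t * ψ t) ≤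
        (n : ℝ) * ψ (n : ℝ) * (ψ (n : ℝ) / |ψ' (n : ℝ)|) *
          (1 + 4 * (ψ (n : ℝ) / ((n : ℝ) * |ψ' (n : ℝ)|))) :=
  integral_t_psi_two_sided_general ψ ψ' hpos hderiv hneg hlam_mono halp_anti n hn hα
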